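/- arXiv:2412.18132 — 2 statements merged into one kernel-verified Lean document; each statement's English description precedes it below -/
import Mathlib

section
/- (Counting lemma) Let p be prime, x ∈ Z_n × Z_n with ord(x) = p^m for some m ≥ 1, and A ⊆ Z_n × Z_n. If 1̂_A^{sym}(x) = 0, then |A ∩ ⟨px⟩^{⊥s}| = p · |A ∩ ⟨x⟩^{⊥s}|. -/
open Complex
open scoped Classical

/-- The character value `e^{2πi t/n}` for `t : ZMod n`. -/
noncomputable def charVal (n : ℕ) (t : ZMod n) : ℂ :=
  Complex.exp (2 * Real.pi * Complex.I * (t.val : ℂ) / (n : ℂ))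

/-- The symplectic form `⟨x,y⟩ = x₁y₂ - x₂y₁` on `ZMod n × ZMod n`. -/
def sympForm {n : ℕ} (x y : ZMod n × ZMod n) : ZMod n :=
  x.1 * y.2 - x.2 * y.1

/-- Symplectic Fourier transform of the indicator of `A`. -/
noncomputable def symFT {n : ℕ} (A : Set (ZMod n × ZMod n)) (ξ : ZMod n × ZMod n) : ℂ :=
  ∑ᶠ a ∈ A, charVal n (sympForm a ξ)

/-- Euclidean Fourier transform of the indicator of `A`. -/
noncomputable def euclFT {n : ℕ} (A : Set (ZMod n × ZMod n)) (ξ : ZMod n × ZMod n) : ℂ :=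
  ∑ᶠ a ∈ A, charVal n (a.1 * ξ.1 + a.2 * ξ.2)

/-- Difference set `ΔA = {a - a' : a,a' ∈ A, a ≠ a'}`. -/
def diffSet {G : Type*} [AddGroup G] (A : Set G) : Set G :=
  {d | ∃ a ∈ A, ∃ a' ∈ A, a ≠ a' ∧ d = a - a'}

/-- `A ⊕ B = G`: every element of `G` is uniquely a sum `a + b` with `a ∈ A`, `b ∈ B`. -/
def IsTilingPair {G : Type*} [AddCommGroup G] (A B : Set G) : Prop :=
  ∀ g : G, ∃! p : G × G, p.1 ∈ A ∧ p.2 ∈ B ∧ p.1 + p.2 = g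

/-- Symplectic orthogonal set `H^{⊥s}`. -/
def sympPerp {n : ℕ} (H : Set (ZMod n × ZMod n)) : Set (ZMod n × ZMod n) :=
  {g | ∀ h ∈ H, sympForm g h = 0}

/-- `(A,S)` is a symplectic spectral pair: `|A| = |S|` and `ΔS ⊆ Z(1̂_A^{sym})`. -/
def IsSympSpectralPair {n : ℕ} (A S : Set (ZMod n × ZMod n)) : Prop :=
  Nat.card A = Nat.card S ∧ ∀ s ∈ S, ∀ s' ∈ S, s ≠ s' → symFT A (s - s') = 0

/-!
For `a ∈ A` the character value `χ(a) = e^{2πi ω(a,x)/n}` is a `p^m`-th root of unity, say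
`ζ^{k(a)}` with `ζ` primitive, and `a ∈ ⟨x⟩^{⊥s}` iff `χ(a) = 1`, `a ∈ ⟨px⟩^{⊥s}` iff `χ(a)^p = 1`.
The vanishing of `∑ χ(a)` says that `Φ_{p^m}(X) = ∑_{i<p} X^{i p^{m-1}}` divides
`∑_a X^{k(a)}`; comparing degrees, the quotient has degree `< p^{m-1}`, so the exponents
`0, p^{m-1}, …, (p-1)p^{m-1}` all occur with the same multiplicity.
-/

open Polynomial Finset

theorem Polynomial.coeff_geom_sum_X_pow_mul_of_natDegree_lt {R : Type*} [CommRing R]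
    {N p i : ℕ} {Q : R[X]} (hQ : Q.natDegree < N) (hi : i < p) :
    ((∑ j ∈ range p, (X ^ N) ^ j) * Q).coeff (i * N) = Q.coeff 0 := by
  simp_rw [sum_mul, finsetSum_coeff, ← pow_mul, coeff_X_pow_mul']
  rw [sum_eq_single_of_mem i (mem_range.2 hi), if_pos (by rw [mul_comm]),
    mul_comm, Nat.sub_self]
  intro j _ hji
  split_ifs with hle
  · have hlt : j < i := lt_of_le_of_ne (by nlinarith) hji
    apply coeff_eq_zero_of_natDegree_lt
    calc Q.natDegree < N := hQ
      _ ≤ (i - j) * N := Nat.le_mul_of_pos_left N (by omega)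
      _ = i * N - N * j := by rw [Nat.sub_mul, mul_comm N]
  · rfl

theorem IsPrimitiveRoot.coeff_mul_prime_pow_eq_coeff_zero {K : Type*} [Field K] [CharZero K]
    {p m : ℕ} (hp : p.Prime) {ζ : K} (hζ : IsPrimitiveRoot ζ (p ^ (m + 1))) {P : ℚ[X]}
    (hdeg : P.natDegree < p ^ (m + 1)) (hP : aeval ζ P = 0) {i : ℕ} (hi : i < p) :
    P.coeff (i * p ^ m) = P.coeff 0 := by
  obtain ⟨Q, rfl⟩ : cyclotomic (p ^ (m + 1)) ℚ ∣ P := by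
    rw [cyclotomic_eq_minpoly_rat hζ (pow_pos hp.pos _)]
    exact minpoly.dvd ℚ ζ hP
  have hQ : Q.natDegree < p ^ m := by
    rcases eq_or_ne Q 0 with rfl | hQ0
    · simp [pow_pos hp.pos]
    rw [natDegree_mul (cyclotomic_ne_zero _ ℚ) hQ0, natDegree_cyclotomic,
      Nat.totient_prime_pow_succ hp, pow_succ] at hdeg
    have := Nat.le_mul_of_pos_right (p ^ m) hp.pos
    rw [Nat.mul_sub_one] at hdeg
    omega
  rw [cyclotomic_prime_pow_eq_geom_sum hp, coeff_geom_sum_X_pow_mul_of_natDegree_lt hQ hi]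
  simpa using (coeff_geom_sum_X_pow_mul_of_natDegree_lt hQ hp.pos).symm

theorem IsPrimitiveRoot.card_filter_dvd_eq_mul_card_filter_eq_zero {K ι : Type*} [Field K]
    [CharZero K] {p m : ℕ} (hp : p.Prime) {ζ : K} (hζ : IsPrimitiveRoot ζ (p ^ (m + 1)))
    {s : Finset ι} {k : ι → ℕ} (hk : ∀ i ∈ s, k i < p ^ (m + 1))
    (hsum : ∑ i ∈ s, ζ ^ k i = 0) :
    #{i ∈ s | p ^ m ∣ k i} = p * #{i ∈ s | k i = 0} := by
  set P : ℚ[X] := ∑ i ∈ s, X ^ k i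
  have hcoeff (j : ℕ) : P.coeff j = #{i ∈ s | k i = j} := by
    simp only [P, finsetSum_coeff, coeff_X_pow, eq_comm (a := j), sum_boole]
  have hdeg : P.natDegree < p ^ (m + 1) := by
    have : P.natDegree ≤ p ^ (m + 1) - 1 :=
      natDegree_sum_le_of_forall_le _ _ fun i hi ↦ by
        rw [natDegree_X_pow]; exact Nat.le_sub_one_of_lt (hk i hi)
    have := pow_pos hp.pos (m + 1)
    omega
  have hP : aeval ζ P = 0 := by simpa [P] using hsum
  have hfibers : #{i ∈ s | p ^ m ∣ k i} = ∑ j ∈ range p, #{i ∈ s | k i = j * p ^ m} := by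
    have hpm := pow_pos hp.pos m
    rw [card_eq_sum_card_fiberwise (f := fun i ↦ k i / p ^ m) (t := range p)]
    · refine sum_congr rfl fun j _ ↦ congrArg card ?_
      rw [filter_filter]
      refine filter_congr fun i _ ↦ ⟨fun ⟨hdvd, hj⟩ ↦ (Nat.div_eq_iff_eq_mul_left hpm hdvd).1 hj,
        fun hj ↦ ⟨hj ▸ dvd_mul_left _ _, hj ▸ Nat.mul_div_cancel _ hpm⟩⟩
    · intro i hi
      rw [mem_coe, mem_filter] at hi
      rw [mem_coe, mem_range, Nat.div_lt_iff_lt_mul hpm, ← pow_succ']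
      exact hk i hi.1
  have : (#{i ∈ s | p ^ m ∣ k i} : ℚ) = p * #{i ∈ s | k i = 0} := by
    rw [hfibers, Nat.cast_sum]
    simp_rw [← hcoeff]
    rw [sum_congr rfl fun j hj ↦ hζ.coeff_mul_prime_pow_eq_coeff_zero hp hdeg hP (mem_range.1 hj),
      sum_const, card_range, nsmul_eq_mul]
  exact_mod_cast this

theorem card_filter_pow_eq_one_eq_mul_card_filter_eq_one {K ι : Type*} [Field K] [CharZero K] {p m : ℕ}
    [HasEnoughRootsOfUnity K (p ^ m)] (hp : p.Prime) {s : Finset ι} {f : ι → K}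
    (hf : ∀ i ∈ s, f i ^ p ^ m = 1) (hsum : ∑ i ∈ s, f i = 0) :
    #{i ∈ s | f i ^ p = 1} = p * #{i ∈ s | f i = 1} := by
  obtain ⟨ζ, hζ⟩ := HasEnoughRootsOfUnity.exists_primitiveRoot K (p ^ m)
  cases m with
  | zero =>
    simp only [pow_zero, pow_one] at hf
    rw [sum_congr rfl hf, sum_const, nsmul_one, Nat.cast_eq_zero, card_eq_zero] at hsum
    simp [hsum]
  | succ m =>
    have : NeZero (p ^ (m + 1)) := ⟨pow_ne_zero _ hp.ne_zero⟩
    choose! k hk hζk using fun i hi ↦ hζ.eq_pow_of_pow_eq_one (hf i hi)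
    have hpow (i) (hi : i ∈ s) : f i ^ p = 1 ↔ p ^ m ∣ k i := by
      rw [← hζk i hi, ← pow_mul, hζ.pow_eq_one_iff_dvd, pow_succ,
        Nat.mul_dvd_mul_iff_right hp.pos]
    have hone (i) (hi : i ∈ s) : f i = 1 ↔ k i = 0 := by
      rw [← hζk i hi, hζ.pow_eq_one_iff_dvd]
      exact ⟨(Nat.eq_zero_of_dvd_of_lt · (hk i hi)), fun h ↦ h ▸ dvd_zero _⟩
    rw [filter_congr hpow, filter_congr hone]
    exact hζ.card_filter_dvd_eq_mul_card_filter_eq_zero hp hk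
      (by rw [← hsum]; exact sum_congr rfl hζk)

theorem charVal_eq_stdAddChar {n : ℕ} [NeZero n] (t : ZMod n) :
    charVal n t = ZMod.stdAddChar t := by
  rw [charVal, ZMod.stdAddChar_apply, ZMod.toCircle_apply]

theorem sympForm_nsmul_right {n : ℕ} (a y : ZMod n × ZMod n) (k : ℕ) :
    sympForm a (k • y) = k • sympForm a y := by
  simp only [sympForm, Prod.smul_fst, Prod.smul_snd, mul_smul_comm, smul_sub]

theorem sympForm_zsmul_right {n : ℕ} (a y : ZMod n × ZMod n) (k : ℤ) :
    sympForm a (k • y) = k • sympForm a y := by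
  simp only [sympForm, Prod.smul_fst, Prod.smul_snd, mul_smul_comm, smul_sub]

theorem mem_sympPerp_zmultiples {n : ℕ} {y a : ZMod n × ZMod n} :
    a ∈ sympPerp (AddSubgroup.zmultiples y : Set (ZMod n × ZMod n)) ↔ sympForm a y = 0 := by
  refine ⟨fun h ↦ h y (AddSubgroup.mem_zmultiples y), fun h z hz ↦ ?_⟩
  obtain ⟨k, rfl⟩ := AddSubgroup.mem_zmultiples_iff.1 hz
  rw [sympForm_zsmul_right, h, smul_zero]

theorem card_inter_sympPerp_zmultiples {n : ℕ} [NeZero n] (A : Set (ZMod n × ZMod n))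
    (y : ZMod n × ZMod n) :
    Nat.card (A ∩ sympPerp (AddSubgroup.zmultiples y : Set (ZMod n × ZMod n)) :
        Set (ZMod n × ZMod n)) =
      #{a ∈ A.toFinset | ZMod.stdAddChar (sympForm a y) = 1} := by
  rw [Nat.card_eq_card_toFinset]
  congr 1
  ext a
  simp [mem_sympPerp_zmultiples, ZMod.injective_stdAddChar.eq_iff' (AddChar.map_zero_eq_one _)]

theorem counting_lemma_general (n p m : ℕ) (hn : 0 < n) (hp : p.Prime)
    (x : ZMod n × ZMod n) (hx : addOrderOf x = p ^ m)
    (A : Set (ZMod n × ZMod n)) (hz : symFT A x = 0) :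
    Nat.card
        (A ∩ sympPerp ((AddSubgroup.zmultiples (p • x) : AddSubgroup _) : Set (ZMod n × ZMod n)) :
          Set (ZMod n × ZMod n)) =
      p * Nat.card
        (A ∩ sympPerp ((AddSubgroup.zmultiples x : AddSubgroup _) : Set (ZMod n × ZMod n)) :
          Set (ZMod n × ZMod n)) := by
  have : NeZero n := ⟨hn.ne'⟩
  have : NeZero p := ⟨hp.ne_zero⟩
  have hpow (a : ZMod n × ZMod n) : ZMod.stdAddChar (sympForm a x) ^ p ^ m = 1 := by
    rw [← AddChar.map_nsmul_eq_pow, ← sympForm_nsmul_right, ← hx, addOrderOf_nsmul_eq_zero]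
    simp [sympForm]
  have hsum : ∑ a ∈ A.toFinset, ZMod.stdAddChar (sympForm a x) = 0 := by
    rw [← hz, symFT, finsum_mem_eq_toFinset_sum]
    simp only [charVal_eq_stdAddChar]
  rw [card_inter_sympPerp_zmultiples, card_inter_sympPerp_zmultiples]
  simp only [sympForm_nsmul_right, AddChar.map_nsmul_eq_pow]
  exact card_filter_pow_eq_one_eq_mul_card_filter_eq_one hp (fun a _ ↦ hpow a) hsum

theorem counting_lemma (n p m : ℕ) (hn : 0 < n) (hp : p.Prime) (hm : 1 ≤ m)
    (x : ZMod n × ZMod n) (hx : addOrderOf x = p ^ m)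
    (A : Set (ZMod n × ZMod n)) (hz : symFT A x = 0) :
    Nat.card
        (A ∩ sympPerp ((AddSubgroup.zmultiples (p • x) : AddSubgroup _) : Set (ZMod n × ZMod n)) :
          Set (ZMod n × ZMod n)) =
      p * Nat.card
        (A ∩ sympPerp ((AddSubgroup.zmultiples x : AddSubgroup _) : Set (ZMod n × ZMod n)) :
          Set (ZMod n × ZMod n)) :=
  counting_lemma_general n p m hn hp x hx A hz
end

section
/- If A is a symplectic spectral set in Z_{p^m} × Z_{p^m} with p^{2m} > |A| ≥ p^{2m-1}, then A is a tile of Z_{p^m} × Z_{p^m} and |A| = p^{2m-1}. -/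
open Complex
open scoped Classical

/-!
Let `(A, S)` be a symplectic spectral pair. Spectral pairs are symmetric, so `ΔA` lies in the
zero set of `symFT S`. Since `|S| = |A|` is neither `0` nor `p ^ (2m)`, Fourier inversion gives
some `v ≠ 0` with `symFT S v ≠ 0`, and `symFT S` then vanishes on no unit multiple `u • v`
(the zero set is Galois-stable). The integers `0, …, p - 1` have unit differences modulo `p ^ m`,
so the translates `A + j • v`, `j < p`, are pairwise disjoint. Hence `p |A| ≤ p ^ (2m)`, which
together with `|A| ≥ p ^ (2m - 1)` forces equality, and `A ⊕ {j • v : j < p}` is the whole group.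
-/

open ZMod Function
open scoped Matrix

lemma Matrix.mul_eq_smul_one_comm_of_card_eq {m n K : Type*} [Fintype m] [Fintype n]
    [DecidableEq m] [DecidableEq n] [Field K] {A : Matrix m n K} {B : Matrix n m K}
    (h : Fintype.card m = Fintype.card n) {c : K} (hc : c ≠ 0) :
    A * B = c • 1 ↔ B * A = c • 1 := by
  rw [← inv_smul_eq_iff₀ hc, ← inv_smul_eq_iff₀ hc, ← Matrix.smul_mul, ← Matrix.mul_smul,
    Matrix.mul_eq_one_comm_of_card_eq m n K h]

lemma isTilingPair_range_of_bijective {G ι : Type*} [AddCommGroup G] {A : Set G} {f : ι → G}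
    (h : Bijective fun x : A × ι => (x.1 : G) + f x.2) : IsTilingPair A (Set.range f) := by
  intro g
  obtain ⟨⟨a, i⟩, rfl⟩ := h.surjective g
  refine ⟨(a, f i), ⟨a.2, ⟨i, rfl⟩, rfl⟩, ?_⟩
  rintro ⟨x, y⟩ ⟨hx, ⟨j, rfl⟩, hxy⟩
  obtain ⟨rfl, rfl⟩ := Prod.ext_iff.mp (h.injective (a₁ := (⟨x, hx⟩, j)) (a₂ := (a, i)) hxy)
  rfl

lemma isUnit_natCast_sub_natCast {p : ℕ} (hp : p.Prime) (m : ℕ) {i j : ℕ} (hi : i < p)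
    (hj : j < p) (hij : i ≠ j) : IsUnit ((i : ZMod (p ^ m)) - j) := by
  wlog hji : j < i generalizing i j
  · rw [← neg_sub]
    exact (this hj hi hij.symm (by omega)).neg
  rw [← Nat.cast_sub hji.le, isUnit_iff_coprime]
  exact ((hp.coprime_iff_not_dvd.mpr
    (Nat.not_dvd_of_pos_of_lt (by omega) (by omega))).symm).pow_right m

variable {q : ℕ}

lemma sympForm_add_sympForm (s ξ y : ZMod q × ZMod q) :
    sympForm s ξ + sympForm ξ y = sympForm (s - y) ξ := by
  simp only [sympForm, Prod.fst_sub, Prod.snd_sub]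
  ring

lemma sympForm_smul_right (s ξ : ZMod q × ZMod q) (u : ZMod q) :
    sympForm s (u • ξ) = u * sympForm s ξ := by
  simp only [sympForm, Prod.smul_fst, Prod.smul_snd, smul_eq_mul]
  ring

section SymplecticFourier

variable [NeZero q]

lemma charVal_eq_stdAddChar_s17 (t : ZMod q) : charVal q t = stdAddChar t := by
  conv_rhs => rw [← natCast_zmod_val t, ← Int.cast_natCast, stdAddChar_coe]
  simp [charVal]

lemma stdAddChar_mul (a b : ZMod q) : stdAddChar (a * b) = stdAddChar a ^ b.val := by
  rw [← AddChar.map_nsmul_eq_pow, nsmul_eq_mul, natCast_zmod_val, mul_comm]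

lemma isPrimitiveRoot_stdAddChar_one : IsPrimitiveRoot (stdAddChar (1 : ZMod q)) q := by
  rw [← Int.cast_one, stdAddChar_coe]
  simpa using Complex.isPrimitiveRoot_exp q (NeZero.ne q)

/-- Both sums are values of one rational polynomial, at the primitive roots `ζ` and `ζ ^ u`,
which share the cyclotomic minimal polynomial. -/
lemma sum_stdAddChar_eq_zero_of_isUnit_mul {ι : Type*} (s : Finset ι) (t : ι → ZMod q)
    {u : ZMod q} (hu : IsUnit u) (h : ∑ i ∈ s, stdAddChar (u * t i) = 0) :
    ∑ i ∈ s, stdAddChar (t i) = 0 := by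
  set ζ : ℂ := stdAddChar (1 : ZMod q)
  have hζ : IsPrimitiveRoot ζ q := isPrimitiveRoot_stdAddChar_one
  have hζu : IsPrimitiveRoot (ζ ^ u.val) q :=
    hζ.pow_of_coprime _ (val_coe_unit_coprime hu.unit)
  set P : Polynomial ℚ := ∑ i ∈ s, Polynomial.X ^ (t i).val
  have haeval (a : ZMod q) :
      Polynomial.aeval (stdAddChar a) P = ∑ i ∈ s, stdAddChar (a * t i) := by
    simp [P, stdAddChar_mul]
  have hmin : minpoly ℚ (ζ ^ u.val) = minpoly ℚ ζ := by
    rw [← Polynomial.cyclotomic_eq_minpoly_rat hζu (NeZero.pos q),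
      ← Polynomial.cyclotomic_eq_minpoly_rat hζ (NeZero.pos q)]
  obtain ⟨Q, hQ⟩ := minpoly.dvd ℚ (ζ ^ u.val) (by rwa [← stdAddChar_mul, one_mul, haeval])
  calc ∑ i ∈ s, stdAddChar (t i) = Polynomial.aeval ζ P := by simp [ζ, haeval]
    _ = 0 := by rw [hQ, map_mul, hmin, minpoly.aeval, zero_mul]

lemma symFT_eq_sum (A : Set (ZMod q × ZMod q)) (ξ : ZMod q × ZMod q) :
    symFT A ξ = ∑ a : A, stdAddChar (sympForm (a : ZMod q × ZMod q) ξ) := by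
  rw [symFT, ← finsum_set_coe_eq_finsum_mem, finsum_eq_sum_of_fintype]
  simp only [charVal_eq_stdAddChar_s17]

lemma symFT_zero (A : Set (ZMod q × ZMod q)) : symFT A 0 = Nat.card A := by
  simp [symFT_eq_sum, sympForm]

lemma symFT_eq_zero_of_smul_eq_zero {S : Set (ZMod q × ZMod q)} {ξ : ZMod q × ZMod q}
    {u : ZMod q} (hu : IsUnit u) (h : symFT S (u • ξ) = 0) : symFT S ξ = 0 := by
  rw [symFT_eq_sum] at h ⊢
  simp only [sympForm_smul_right] at h
  exact sum_stdAddChar_eq_zero_of_isUnit_mul _ _ hu h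

lemma sum_stdAddChar_sympForm (d : ZMod q × ZMod q) :
    ∑ ξ, stdAddChar (sympForm d ξ) = if d = 0 then (q : ℂ) ^ 2 else 0 := by
  have hsplit (ξ : ZMod q × ZMod q) :
      stdAddChar (sympForm d ξ) = stdAddChar (ξ.1 * -d.2) * stdAddChar (ξ.2 * d.1) := by
    rw [← AddChar.map_add_eq_mul, sympForm]
    ring_nf
  simp only [hsplit, Fintype.sum_prod_type, ← Finset.sum_mul_sum,
    AddChar.sum_mulShift _ (isPrimitive_stdAddChar q), card, neg_eq_zero]
  rcases d with ⟨d₁, d₂⟩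
  by_cases h₁ : d₁ = 0 <;> by_cases h₂ : d₂ = 0 <;> simp [h₁, h₂, sq]

lemma sum_symFT_mul_stdAddChar (S : Set (ZMod q × ZMod q)) (y : ZMod q × ZMod q) :
    ∑ ξ, symFT S ξ * stdAddChar (sympForm ξ y) = if y ∈ S then (q : ℂ) ^ 2 else 0 := by
  simp only [symFT_eq_sum, Finset.sum_mul, ← AddChar.map_add_eq_mul, sympForm_add_sympForm]
  rw [Finset.sum_comm]
  simp only [sum_stdAddChar_sympForm, sub_eq_zero]
  split_ifs with hy
  · rw [Fintype.sum_eq_single ⟨y, hy⟩ fun s hs => if_neg fun h => hs (Subtype.ext h), if_pos rfl]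
  · exact Finset.sum_eq_zero fun s _ => if_neg (ne_of_mem_of_not_mem s.2 hy)

lemma exists_ne_zero_symFT_ne_zero {S : Set (ZMod q × ZMod q)} (hS : S.Nonempty)
    (hSu : S ≠ Set.univ) : ∃ v ≠ 0, symFT S v ≠ 0 := by
  by_contra! hvanish
  obtain ⟨y, hy⟩ := (Set.ne_univ_iff_exists_notMem S).mp hSu
  have hinv := sum_symFT_mul_stdAddChar S y
  rw [if_neg hy, Finset.sum_eq_single 0 fun ξ _ hξ => by rw [hvanish ξ hξ, zero_mul]
    (fun h => absurd (Finset.mem_univ _) h)] at hinv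
  simp [symFT_zero, sympForm] at hinv
  obtain ⟨x, hx⟩ := hS
  exact hinv _ _ hx

lemma star_stdAddChar_mul_stdAddChar (x y : ZMod q) :
    star (stdAddChar x) * stdAddChar y = stdAddChar (y - x) := by
  rw [Complex.star_def, ← AddChar.map_neg_eq_conj, ← AddChar.map_add_eq_mul, neg_add_eq_sub]

/-- The square matrix `(ψ ⟨a, s⟩)_{a ∈ A, s ∈ S}` has orthogonal columns of equal length, hence
also orthogonal rows. -/
theorem IsSympSpectralPair.symm {A S : Set (ZMod q × ZMod q)} (h : IsSympSpectralPair A S) :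
    IsSympSpectralPair S A := by
  obtain ⟨hcard, hS⟩ := h
  refine ⟨hcard.symm, fun a ha a' ha' hne => ?_⟩
  have hA : (Nat.card A : ℂ) ≠ 0 :=
    Nat.cast_ne_zero.mpr (Nat.card_ne_zero.mpr ⟨⟨⟨a, ha⟩⟩, inferInstance⟩)
  let M : Matrix A S ℂ := Matrix.of fun a s => stdAddChar (sympForm (a : ZMod q × ZMod q) s)
  have hcols : Mᴴ * M = (Nat.card A : ℂ) • 1 := by
    ext s s'
    have hentry : (Mᴴ * M) s s' = symFT A (s' - s) := by
      simp only [symFT_eq_sum, Matrix.mul_apply, Matrix.conjTranspose_apply, M, Matrix.of_apply,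
        star_stdAddChar_mul_stdAddChar]
      congr! 2 with x
      simp only [sympForm, Prod.fst_sub, Prod.snd_sub]
      ring
    rw [hentry, Matrix.smul_apply, Matrix.one_apply]
    split_ifs with hss
    · simp [hss, symFT_zero]
    · simpa using hS s' s'.2 s s.2 fun h => hss (Subtype.ext h).symm
  have hrows := (Matrix.mul_eq_smul_one_comm_of_card_eq (by
    simpa only [Nat.card_eq_fintype_card] using hcard) hA).mpr hcols
  have hentry := congrFun (congrFun hrows ⟨a', ha'⟩) ⟨a, ha⟩
  simp only [Matrix.mul_apply, Matrix.conjTranspose_apply, M, Matrix.of_apply, Matrix.smul_apply,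
    Matrix.one_apply, Subtype.mk.injEq, hne.symm, if_false, smul_zero] at hentry
  rw [symFT_eq_sum, ← hentry]
  congr! 1 with s
  rw [mul_comm, star_stdAddChar_mul_stdAddChar]
  congr 1
  simp only [sympForm, Prod.fst_sub, Prod.snd_sub]
  ring

lemma injective_add_smul_of_isSympSpectralPair {A S : Set (ZMod q × ZMod q)}
    (h : IsSympSpectralPair S A) {v : ZMod q × ZMod q} (hv : v ≠ 0) (hSv : symFT S v ≠ 0)
    {ι : Type*} {c : ι → ZMod q} (hc : Pairwise fun i j => IsUnit (c i - c j)) :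
    Injective fun x : A × ι => (x.1 : ZMod q × ZMod q) + c x.2 • v := by
  rintro ⟨a, i⟩ ⟨a', j⟩ hEq
  dsimp only at hEq
  by_cases hij : i = j
  · subst hij
    exact Prod.ext (Subtype.ext (add_right_cancel hEq)) rfl
  have hu := hc (Ne.symm hij)
  have hdiff : (a : ZMod q × ZMod q) - a' = (c j - c i) • v := by
    rw [sub_smul, sub_eq_sub_iff_add_eq_add, hEq, add_comm]
  have hne : (a : ZMod q × ZMod q) ≠ a' := fun h' =>
    hv (hu.smul_eq_zero.mp (by rw [← hdiff, h', sub_self]))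
  exact absurd (symFT_eq_zero_of_smul_eq_zero hu (hdiff ▸ h.2 a a.2 a' a'.2 hne)) hSv

end SymplecticFourier

theorem spectral_large_is_tile (p m : ℕ) (hp : p.Prime) (hm : 1 ≤ m)
    (A : Set (ZMod (p ^ m) × ZMod (p ^ m)))
    (hspec : ∃ S, IsSympSpectralPair A S)
    (hlo : p ^ (2 * m - 1) ≤ Nat.card A) (hhi : Nat.card A < p ^ (2 * m)) :
    (∃ B, IsTilingPair A B) ∧ Nat.card A = p ^ (2 * m - 1) := by
  have : NeZero (p ^ m) := ⟨pow_ne_zero m hp.ne_zero⟩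
  obtain ⟨S, hAS⟩ := hspec
  have hcardG : Nat.card (ZMod (p ^ m) × ZMod (p ^ m)) = p ^ (2 * m) := by
    rw [Nat.card_prod, Nat.card_zmod, ← pow_add, two_mul]
  have hpow : p ^ (2 * m - 1) * p = p ^ (2 * m) := by
    rw [← pow_succ, Nat.sub_add_cancel (by omega)]
  have hS : S.Nonempty := by
    have hS0 : Nat.card S ≠ 0 := hAS.1 ▸ ((pow_pos hp.pos _).trans_le hlo).ne'
    exact Set.nonempty_coe_sort.mp (Nat.card_ne_zero.mp hS0).1
  have hSu : S ≠ Set.univ := by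
    rintro rfl
    rw [hAS.1, Nat.card_univ, hcardG] at hhi
    exact lt_irrefl _ hhi
  obtain ⟨v, hv, hSv⟩ := exists_ne_zero_symFT_ne_zero hS hSu
  have hinj := injective_add_smul_of_isSympSpectralPair hAS.symm hv hSv
    (c := fun j : Fin p => ((j : ℕ) : ZMod (p ^ m)))
    fun i j hij => isUnit_natCast_sub_natCast hp m i.2 j.2 (Fin.val_injective.ne hij)
  have hcard : Nat.card (A × Fin p) = Nat.card A * p := by simp
  have hle := hcard ▸ hcardG ▸ Nat.card_le_card_of_injective _ hinj
  have hA : Nat.card A = p ^ (2 * m - 1) :=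
    le_antisymm (Nat.le_of_mul_le_mul_right (hpow ▸ hle) hp.pos) hlo
  refine ⟨⟨Set.range fun j : Fin p => ((j : ℕ) : ZMod (p ^ m)) • v, ?_⟩, hA⟩
  exact isTilingPair_range_of_bijective ((Nat.bijective_iff_injective_and_card _).mpr
    ⟨hinj, by rw [hcard, hcardG, hA, hpow]⟩)
end
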